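/- Cubical integral representation of multiple zeta values (Proposition 1.3): For every tuple of positive integers k = (k_1,…,k_p) with k_1 ≥ 2 and n = k_1+…+k_p, the function f_k is Lebesgue integrable on the open unit cube (0,1)^n and ζ(k_1,…,k_p) = ∫_{(0,1)^n} f_k(x_1,…,x_n) dx_1⋯dx_n. -/

import Mathlib

/-!
On the cube put `y_i = x₁ ⋯ x_{K_i}`. Expanding every factor `y_{i-1} / (1 - y_i)` of `f_k` into
a geometric series writes `f_k` as a sum over `m ∈ ℕ^p` of monomials in which each variable of the
`t`-th block carries the exponent `ν_t - 1`, where `ν_t = ∑_{i ≥ t} (m_i + 1)`. Such a monomial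
integrates to `∏_t ν_t^{-k_t}`, monotone convergence exchanges sum and integral, and `m ↦ ν` is a
bijection from `ℕ^p` onto the strictly decreasing positive `p`-tuples, so the sum is `ζ(k)`.
It is finite because `m_i + 1 ≤ ν_i` and `m_i + 1 ≤ ν_1` give
`ν_1^{k_1} ν_2^{k_2} ⋯ ν_p^{k_p} ≥ ν_1 ∏_t ν_t ≥ ∏_t (m_t + 1)^{1 + 1/p}` when `k_1 ≥ 2`.
-/

open MeasureTheory

/-- The multiple zeta value `ζ(k₁,…,k_p) = ∑_{n₁ > … > n_p > 0} 1/(n₁^{k₁} ⋯ n_p^{k_p})`. -/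
noncomputable def zeta (k : List ℕ) : ℝ :=
  ∑' n : {f : Fin k.length → ℕ // StrictAnti f ∧ ∀ i, 0 < f i},
    ∏ i : Fin k.length, (1 : ℝ) / (n.1 i : ℝ) ^ (k.get i)

/-- The cubical integrand
`f_k(x₁,…,x_n) = ∏_{i=1}^p (x₁⋯x_{K_{i−1}})/(1 − x₁⋯x_{K_i})`, where
`K_i = k₁ + … + k_i` (indices of the variables starting at `0`). -/
noncomputable def fk (k : List ℕ) (x : ℕ → ℝ) : ℝ :=
  ∏ i ∈ Finset.range k.length,
    (∏ j ∈ Finset.range ((k.take i).sum), x j) /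
      (1 - ∏ j ∈ Finset.range ((k.take (i + 1)).sum), x j)

/-- The open unit cube `(0,1)^n`. -/
def cube (n : ℕ) : Set (Fin n → ℝ) := {x | ∀ i, x i ∈ Set.Ioo (0 : ℝ) 1}

/-- Extension of a vector of `ℝ^n` to a function `ℕ → ℝ` (by `0`). -/
def extFin {n : ℕ} (x : Fin n → ℝ) : ℕ → ℝ :=
  fun j => if h : j < n then x ⟨j, h⟩ else 0

open Finset
open scoped ENNReal

theorem ENNReal.prod_tsum_eq_tsum_pi {α : Type*} :
    ∀ {p : ℕ} (f : Fin p → α → ℝ≥0∞),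
      ∏ i, ∑' a, f i a = ∑' m : Fin p → α, ∏ i, f i (m i)
  | 0, f => by simp
  | p + 1, f => by
    rw [← (Fin.consEquiv fun _ : Fin (p + 1) => α).tsum_eq, ENNReal.tsum_prod',
      Fin.prod_univ_succ, ENNReal.prod_tsum_eq_tsum_pi fun i => f i.succ,
      ← ENNReal.tsum_mul_right]
    simp [Fin.prod_univ_succ, Fin.consEquiv, ENNReal.tsum_mul_left]

theorem ENNReal.ofReal_prod_div_one_sub_eq_tsum {p : ℕ} {a b : Fin p → ℝ} (ha : ∀ i, 0 ≤ a i)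
    (hb : ∀ i, 0 ≤ b i) (hb1 : ∀ i, b i < 1) :
    ENNReal.ofReal (∏ i, a i / (1 - b i)) =
      ∑' m : Fin p → ℕ, ENNReal.ofReal (∏ i, a i * b i ^ m i) := by
  have hterm (i : Fin p) (r : ℕ) : 0 ≤ a i * b i ^ r := mul_nonneg (ha i) (pow_nonneg (hb i) r)
  have hgeom (i : Fin p) :
      ENNReal.ofReal (a i / (1 - b i)) = ∑' r : ℕ, ENNReal.ofReal (a i * b i ^ r) := by
    rw [← ENNReal.ofReal_tsum_of_nonneg (hterm i)
      ((summable_geometric_of_lt_one (hb i) (hb1 i)).mul_left _), tsum_mul_left,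
      tsum_geometric_of_lt_one (hb i) (hb1 i), div_eq_mul_inv]
  rw [ENNReal.ofReal_prod_of_nonneg fun i _ => div_nonneg (ha i) (sub_nonneg.2 (hb1 i).le)]
  simp_rw [hgeom, ENNReal.prod_tsum_eq_tsum_pi,
    ENNReal.ofReal_prod_of_nonneg fun i _ => hterm i _]

def tailSum {p : ℕ} (m : Fin p → ℕ) (i : ℕ) : ℕ :=
  ∑ j : Fin p with i ≤ j.val, (m j + 1)

section tailSum

variable {p : ℕ} (m : Fin p → ℕ)

theorem tailSum_of_le {i : ℕ} (hi : p ≤ i) : tailSum m i = 0 :=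
  sum_eq_zero fun j hj => absurd (mem_filter.1 hj).2 (by have := j.2; omega)

theorem tailSum_succ (t : Fin p) : tailSum m t = m t + 1 + tailSum m (t + 1) := by
  have (i : Fin p) : (if (t : ℕ) ≤ i then m i + 1 else 0) =
      (if t = i then m i + 1 else 0) + if (t : ℕ) + 1 ≤ i then m i + 1 else 0 := by
    simp only [Fin.ext_iff]
    split_ifs <;> omega
  rw [tailSum, tailSum, sum_filter, sum_filter, sum_congr rfl fun i _ => this i,
    sum_add_distrib, sum_ite_eq]
  simp

theorem tailSum_eq_sum_ite (t : Fin p) :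
    tailSum m t = ∑ i, ((if t < i then 1 else 0) + if t ≤ i then m i else 0) + 1 := by
  have (i : Fin p) : (if (t : ℕ) ≤ i then m i + 1 else 0) =
      ((if t < i then 1 else 0) + if t ≤ i then m i else 0) + if t = i then 1 else 0 := by
    simp only [Fin.lt_def, Fin.le_def, Fin.ext_iff]
    split_ifs <;> omega
  rw [tailSum, sum_filter, sum_congr rfl fun i _ => this i, sum_add_distrib, sum_ite_eq]
  simp

theorem tailSum_antitone : Antitone (tailSum m) := fun _ _ h =>
  sum_le_sum_of_subset fun j => by simp only [mem_filter, mem_univ, true_and]; omega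

theorem le_tailSum (i : Fin p) : m i + 1 ≤ tailSum m i := by
  rw [tailSum_succ]; omega

theorem tailSum_strictAnti : StrictAnti fun i : Fin p => tailSum m i := fun i j hij => by
  have := tailSum_antitone m (show (i : ℕ) + 1 ≤ j from hij)
  show tailSum m j < tailSum m i
  rw [tailSum_succ m i]
  omega

end tailSum

def zeroExtend {p : ℕ} (f : Fin p → ℕ) (i : ℕ) : ℕ :=
  if h : i < p then f ⟨i, h⟩ else 0

def gaps {p : ℕ} (f : Fin p → ℕ) (i : Fin p) : ℕ :=
  zeroExtend f i - zeroExtend f (i + 1) - 1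

theorem tailSum_gaps {p : ℕ} {f : Fin p → ℕ} (hanti : StrictAnti f) (hpos : ∀ i, 0 < f i)
    (i : ℕ) : tailSum (gaps f) i = zeroExtend f i := by
  have hstep (i : ℕ) (hi : i < p) : zeroExtend f (i + 1) < zeroExtend f i := by
    unfold zeroExtend
    split_ifs with h
    · exact hanti (Fin.mk_lt_mk.2 i.lt_succ_self)
    · exact hpos _
  induction hd : p - i generalizing i with
  | zero => simp [tailSum_of_le _ (show p ≤ i by omega), zeroExtend, show ¬ i < p by omega]
  | succ d ih =>
    rw [show i = ((⟨i, by omega⟩ : Fin p) : ℕ) from rfl, tailSum_succ, ih (i + 1) (by omega)]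
    have := hstep i (by omega)
    simp only [gaps]
    omega

def tailSumEquiv (p : ℕ) :
    (Fin p → ℕ) ≃ {f : Fin p → ℕ // StrictAnti f ∧ ∀ i, 0 < f i} where
  toFun m := ⟨fun i => tailSum m i, tailSum_strictAnti m,
    fun i => (le_tailSum m i).trans_lt' (Nat.succ_pos _)⟩
  invFun f := gaps f.1
  left_inv m := by
    funext i
    have (j : ℕ) : zeroExtend (fun i : Fin p => tailSum m i) j = tailSum m j := by
      unfold zeroExtend
      split_ifs with h
      · rfl
      · exact (tailSum_of_le m (not_lt.1 h)).symm
    simp only [gaps, this, tailSum_succ m i]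
    omega
  right_inv := by
    rintro ⟨f, hanti, hpos⟩
    ext i
    simpa [zeroExtend] using tailSum_gaps hanti hpos i

namespace Composition

variable {n : ℕ} (c : Composition n)

theorem lt_sizeUpTo_iff_index_lt (j : Fin n) (i : ℕ) :
    (j : ℕ) < c.sizeUpTo i ↔ (c.index j : ℕ) < i := by
  constructor
  · intro h
    by_contra! hi
    exact (h.trans_le (c.monotone_sizeUpTo hi)).not_ge (c.sizeUpTo_index_le j)
  · intro hi
    exact (c.lt_sizeUpTo_index_succ j).trans_le (c.monotone_sizeUpTo (by simpa using hi))

theorem prod_apply_index {M : Type*} [CommMonoid M] (g : Fin c.length → M) :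
    ∏ j, g (c.index j) = ∏ i, g i ^ c.blocksFun i := by
  simp [← c.prod_prod_apply_embedding]

theorem prod_mul_pow_eq_prod_pow_tailSum {M : Type*} [CommMonoid M] (m : Fin c.length → ℕ)
    (x : Fin n → M) :
    ∏ i : Fin c.length, (∏ j with j.val < c.sizeUpTo i, x j) *
        (∏ j with j.val < c.sizeUpTo (i + 1), x j) ^ m i =
      ∏ j, x j ^ (tailSum m (c.index j) - 1) := by
  have hfilter (K : ℕ) :
      ∏ j with j.val < K, x j = ∏ j, x j ^ (if (j : ℕ) < K then 1 else 0) := by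
    rw [prod_filter]
    exact prod_congr rfl fun j _ => by split_ifs <;> simp
  have hexp (j : Fin n) : ∑ i : Fin c.length, ((if (j : ℕ) < c.sizeUpTo i then 1 else 0) +
      (if (j : ℕ) < c.sizeUpTo (i + 1) then 1 else 0) * m i) = tailSum m (c.index j) - 1 := by
    simp only [c.lt_sizeUpTo_iff_index_lt, tailSum_eq_sum_ite, Nat.lt_succ_iff, ← Fin.lt_def,
      ← Fin.le_def, ite_mul, one_mul, zero_mul, Nat.add_sub_cancel]
  simp_rw [hfilter, ← prod_pow, ← prod_mul_distrib, ← pow_mul, ← pow_add]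
  rw [prod_comm]
  simp_rw [prod_pow_eq_pow_sum, hexp]

end Composition

theorem cube_eq_pi (n : ℕ) : cube n = Set.univ.pi fun _ => Set.Ioo (0 : ℝ) 1 := by
  ext x; simp [cube]

theorem measurableSet_cube (n : ℕ) : MeasurableSet (cube n) := by
  rw [cube_eq_pi]; exact .univ_pi fun _ => measurableSet_Ioo

theorem volume_restrict_cube (n : ℕ) :
    volume.restrict (cube n) = Measure.pi fun _ => volume.restrict (Set.Ioo (0 : ℝ) 1) := by
  rw [cube_eq_pi, volume_pi, Measure.restrict_pi_pi]

theorem integral_Ioo_zero_one_pow (e : ℕ) :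
    ∫ t in Set.Ioo (0 : ℝ) 1, t ^ e = ((e : ℝ) + 1)⁻¹ := by
  rw [← integral_Ioc_eq_integral_Ioo, ← intervalIntegral.integral_of_le zero_le_one,
    integral_pow]
  simp

theorem lintegral_cube_prod_pow {n : ℕ} (e : Fin n → ℕ) :
    ∫⁻ x in cube n, ENNReal.ofReal (∏ j, x j ^ e j) =
      ENNReal.ofReal (∏ j, ((e j : ℝ) + 1)⁻¹) := by
  have hint : Integrable (fun x : Fin n → ℝ => ∏ j, x j ^ e j) (volume.restrict (cube n)) := by
    rw [volume_restrict_cube]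
    exact .fintype_prod fun j =>
      (continuous_pow (e j)).integrableOn_Icc.mono_set Set.Ioo_subset_Icc_self
  have hnonneg : 0 ≤ᵐ[volume.restrict (cube n)] fun x : Fin n → ℝ => ∏ j, x j ^ e j := by
    filter_upwards [ae_restrict_mem (measurableSet_cube n)] with x hx
    exact prod_nonneg fun j _ => pow_nonneg (hx j).1.le _
  rw [← ofReal_integral_eq_lintegral_ofReal hint hnonneg, volume_restrict_cube,
    integral_fintype_prod_eq_prod (fun j (t : ℝ) => t ^ e j)]
  simp_rw [integral_Ioo_zero_one_pow]

section extFin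

variable {n : ℕ} {x : Fin n → ℝ}

theorem extFin_coe (x : Fin n → ℝ) (j : Fin n) : extFin x j = x j := by
  simp [extFin]

theorem extFin_mem_Ico (hx : x ∈ cube n) (j : ℕ) : extFin x j ∈ Set.Ico 0 1 := by
  unfold extFin
  split_ifs with h
  · exact Set.Ioo_subset_Ico_self (hx ⟨j, h⟩)
  · simp

@[fun_prop]
theorem measurable_extFin_apply (j : ℕ) : Measurable fun x : Fin n → ℝ => extFin x j := by
  unfold extFin
  split_ifs <;> fun_prop

theorem measurable_fk_extFin (k : List ℕ) :
    Measurable fun x : Fin k.sum → ℝ => fk k (extFin x) := by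
  unfold fk
  fun_prop

theorem prod_range_extFin (x : Fin n → ℝ) {K : ℕ} (hK : K ≤ n) :
    ∏ j ∈ range K, extFin x j = ∏ j with j.val < K, x j := by
  have hrange : (range n).filter (· < K) = range K := by
    ext j; simp only [mem_filter, mem_range]; omega
  simp_rw [prod_filter, ← extFin_coe x,
    Fin.prod_univ_eq_prod_range (fun j => if j < K then extFin x j else 1), ← prod_filter, hrange]

theorem prod_range_extFin_nonneg (hx : x ∈ cube n) (K : ℕ) :
    0 ≤ ∏ j ∈ range K, extFin x j :=
  prod_nonneg fun j _ => (extFin_mem_Ico hx j).1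

theorem prod_range_extFin_lt_one (hx : x ∈ cube n) {K : ℕ} (hK : 0 < K) :
    ∏ j ∈ range K, extFin x j < 1 := by
  obtain ⟨K, rfl⟩ := Nat.exists_eq_add_one.2 hK
  rw [prod_range_succ]
  exact mul_lt_one_of_nonneg_of_lt_one_right
    (prod_le_one (fun j _ => (extFin_mem_Ico hx j).1) fun j _ => (extFin_mem_Ico hx j).2.le)
    (extFin_mem_Ico hx K).1 (extFin_mem_Ico hx K).2

variable (c : Composition n)

theorem fk_eq_prod (x : Fin n → ℝ) :
    fk c.blocks (extFin x) = ∏ i : Fin c.length, (∏ j ∈ range (c.sizeUpTo i), extFin x j) /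
      (1 - ∏ j ∈ range (c.sizeUpTo (i + 1)), extFin x j) :=
  (Fin.prod_univ_eq_prod_range (fun i => (∏ j ∈ range (c.sizeUpTo i), extFin x j) /
    (1 - ∏ j ∈ range (c.sizeUpTo (i + 1)), extFin x j)) c.length).symm

theorem fk_nonneg (hx : x ∈ cube n) : 0 ≤ fk c.blocks (extFin x) := by
  rw [fk_eq_prod]
  exact prod_nonneg fun i _ => div_nonneg (prod_range_extFin_nonneg hx _)
    (sub_nonneg.2 (prod_range_extFin_lt_one hx (c.sizeUpTo_strict_mono i.2).pos).le)

theorem ofReal_fk_eq_tsum (hx : x ∈ cube n) :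
    ENNReal.ofReal (fk c.blocks (extFin x)) =
      ∑' m : Fin c.length → ℕ, ENNReal.ofReal (∏ j, x j ^ (tailSum m (c.index j) - 1)) := by
  rw [fk_eq_prod, ENNReal.ofReal_prod_div_one_sub_eq_tsum
    (fun _ => prod_range_extFin_nonneg hx _) (fun _ => prod_range_extFin_nonneg hx _)
    (fun i => prod_range_extFin_lt_one hx (c.sizeUpTo_strict_mono i.2).pos)]
  simp_rw [prod_range_extFin x (c.sizeUpTo_le _), c.prod_mul_pow_eq_prod_pow_tailSum]

theorem lintegral_cube_fk :
    ∫⁻ x in cube n, ENNReal.ofReal (fk c.blocks (extFin x)) =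
      ∑' m : Fin c.length → ℕ,
        ENNReal.ofReal (∏ i : Fin c.length, ((tailSum m i : ℝ) ^ c.blocksFun i)⁻¹) := by
  calc ∫⁻ x in cube n, ENNReal.ofReal (fk c.blocks (extFin x))
      = ∫⁻ x in cube n, ∑' m : Fin c.length → ℕ,
          ENNReal.ofReal (∏ j, x j ^ (tailSum m (c.index j) - 1)) :=
        setLIntegral_congr_fun (measurableSet_cube n) fun x hx => ofReal_fk_eq_tsum c hx
    _ = ∑' m : Fin c.length → ℕ, ∫⁻ x in cube n,
          ENNReal.ofReal (∏ j, x j ^ (tailSum m (c.index j) - 1)) :=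
        lintegral_tsum fun m => (Measurable.ennreal_ofReal (by fun_prop)).aemeasurable
    _ = _ := by
        refine tsum_congr fun m => ?_
        have hcast (i : Fin c.length) : (((tailSum m i - 1 : ℕ) : ℝ) + 1) = tailSum m i := by
          rw [Nat.cast_pred ((le_tailSum m i).trans_lt' (Nat.succ_pos _))]
          ring
        simp_rw [lintegral_cube_prod_pow, hcast,
          c.prod_apply_index fun i => ((tailSum m i : ℝ))⁻¹, inv_pow]

end extFin

theorem prod_rpow_one_add_inv_card_le {ι : Type*} [Fintype ι] [Nonempty ι] {a b : ι → ℝ}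
    {c : ℝ} (ha : ∀ i, 0 ≤ a i) (hab : ∀ i, a i ≤ b i) (hac : ∀ i, a i ≤ c) :
    (∏ i, a i) ^ (1 + (Fintype.card ι : ℝ)⁻¹) ≤ c * ∏ i, b i := by
  have hA : 0 ≤ ∏ i, a i := prod_nonneg fun i _ => ha i
  have hc : 0 ≤ c := (ha (Classical.arbitrary ι)).trans (hac _)
  have hroot : (∏ i, a i) ^ (Fintype.card ι : ℝ)⁻¹ ≤ c := by
    calc (∏ i, a i) ^ (Fintype.card ι : ℝ)⁻¹
        ≤ (c ^ Fintype.card ι) ^ (Fintype.card ι : ℝ)⁻¹ := by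
          refine Real.rpow_le_rpow hA ?_ (by positivity)
          exact (prod_le_prod (fun i _ => ha i) fun i _ => hac i).trans_eq
            (by rw [prod_const, card_univ])
      _ = c := Real.pow_rpow_inv_natCast hc Fintype.card_ne_zero
  rw [Real.rpow_add' hA (by positivity), Real.rpow_one, mul_comm]
  exact mul_le_mul hroot (prod_le_prod (fun i _ => ha i) fun i _ => hab i) hA hc

theorem mul_prod_le_prod_pow {p : ℕ} {x : Fin (p + 1) → ℝ} {e : Fin (p + 1) → ℕ}
    (hx : ∀ i, 1 ≤ x i) (he : ∀ i, 1 ≤ e i) (he0 : 2 ≤ e 0) :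
    x 0 * ∏ i, x i ≤ ∏ i, x i ^ e i := by
  have hx0 (i : Fin (p + 1)) : 0 ≤ x i := by linarith [hx i]
  rw [Fin.prod_univ_succ, Fin.prod_univ_succ, ← mul_assoc, ← sq]
  exact mul_le_mul (pow_le_pow_right₀ (hx 0) he0)
    (prod_le_prod (fun i _ => hx0 _) fun i _ => le_self_pow₀ (hx _) (by have := he i.succ; omega))
    (prod_nonneg fun i _ => hx0 _) (pow_nonneg (hx0 0) _)

theorem tsum_ofReal_prod_tailSum_inv_ne_top {p : ℕ} {e : Fin (p + 1) → ℕ}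
    (he : ∀ i, 1 ≤ e i) (he0 : 2 ≤ e 0) :
    ∑' m : Fin (p + 1) → ℕ,
      ENNReal.ofReal (∏ i : Fin (p + 1), ((tailSum m i : ℝ) ^ e i)⁻¹) ≠ ⊤ := by
  set s : ℝ := 1 + ((p + 1 : ℕ) : ℝ)⁻¹
  have hbound (m : Fin (p + 1) → ℕ) :
      ∏ i : Fin (p + 1), ((tailSum m i : ℝ) ^ e i)⁻¹ ≤ ∏ i, (((m i : ℝ) + 1) ^ s)⁻¹ := by
    have hν (i : Fin (p + 1)) : (m i : ℝ) + 1 ≤ tailSum m i := by exact_mod_cast le_tailSum m i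
    have hν0 (i : Fin (p + 1)) : (m i : ℝ) + 1 ≤ tailSum m 0 :=
      (hν i).trans (by exact_mod_cast tailSum_antitone m (Nat.zero_le _))
    rw [prod_inv_distrib, prod_inv_distrib,
      Real.finsetProd_rpow univ (fun i => (m i : ℝ) + 1) (fun i _ => by positivity)]
    refine inv_anti₀ (by positivity) ?_
    calc (∏ i, ((m i : ℝ) + 1)) ^ s
        ≤ (tailSum m 0 : ℝ) * ∏ i : Fin (p + 1), (tailSum m i : ℝ) := by
          simpa [s] using prod_rpow_one_add_inv_card_le (fun i => by positivity) hν hν0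
      _ ≤ ∏ i : Fin (p + 1), (tailSum m i : ℝ) ^ e i :=
          mul_prod_le_prod_pow (fun i => by linarith [hν i, (m i).cast_nonneg (α := ℝ)]) he he0
  have hsum : ∑' a : ℕ, ENNReal.ofReal (((a : ℝ) + 1) ^ s)⁻¹ ≠ ⊤ := by
    rw [← ENNReal.ofReal_tsum_of_nonneg (fun a => by positivity)]
    · exact ENNReal.ofReal_ne_top
    · have hs : 1 < s := by simp only [s, lt_add_iff_pos_right]; positivity
      simpa using (summable_nat_add_iff 1).2 (Real.summable_nat_rpow_inv.2 hs)
  refine ne_top_of_le_ne_top ?_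
    (ENNReal.tsum_le_tsum fun m => ENNReal.ofReal_le_ofReal (hbound m))
  rw [tsum_congr fun m => ENNReal.ofReal_prod_of_nonneg fun i _ => by positivity,
    ← ENNReal.prod_tsum_eq_tsum_pi fun _ (a : ℕ) => ENNReal.ofReal (((a : ℝ) + 1) ^ s)⁻¹]
  exact ENNReal.prod_ne_top fun _ _ => hsum

theorem zeta_eq_integral_cube (k : List ℕ)
    (hk : ∀ a ∈ k, 0 < a) (hk1 : 2 ≤ k.headI) :
    IntegrableOn (fun x : Fin k.sum → ℝ => fk k (extFin x)) (cube k.sum) volume ∧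
      (∫ x in cube k.sum, fk k (extFin x)) = zeta k := by
  obtain ⟨a, t, rfl⟩ := List.exists_cons_of_ne_nil (show k ≠ [] by rintro rfl; simp at hk1)
  let c : Composition (a :: t).sum := ⟨a :: t, hk _, rfl⟩
  have hlint := lintegral_cube_fk c
  have hfin : ∫⁻ x in cube c.blocks.sum, ENNReal.ofReal (fk c.blocks (extFin x)) ≠ ⊤ :=
    hlint ▸ tsum_ofReal_prod_tailSum_inv_ne_top c.one_le_blocksFun hk1
  have hnonneg : 0 ≤ᵐ[volume.restrict (cube c.blocks.sum)] fun x => fk c.blocks (extFin x) :=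
    (ae_restrict_iff' (measurableSet_cube _)).2 (.of_forall fun _ => fk_nonneg c)
  have hmeas := (measurable_fk_extFin c.blocks).aestronglyMeasurable
    (μ := volume.restrict (cube _))
  refine ⟨⟨hmeas, (hasFiniteIntegral_iff_ofReal hnonneg).2 hfin.lt_top⟩, ?_⟩
  rw [integral_eq_lintegral_of_nonneg_ae hnonneg hmeas, hlint,
    ENNReal.tsum_toReal_eq fun _ => ENNReal.ofReal_ne_top, zeta, ← (tailSumEquiv _).tsum_eq]
  refine tsum_congr fun m => ?_
  rw [ENNReal.toReal_ofReal (prod_nonneg fun _ _ => by positivity)]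
  simp only [one_div]
  rfl
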